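/- arXiv:2205.15310 — 5 statements merged into one kernel-verified Lean document; each statement's English description precedes it below -/
import Mathlib

section
/- Let β > 1, C ≥ 1 and λ ≥ 1 be real numbers, and let (E_k)_{k≥0} be a sequence of nonnegative real numbers satisfying the recursive inequality E_{k+1} ≤ C·λ^{k+1}·E_k^β for every k ≥ 0. Then, setting M = C^{1/(β-1)}·λ^{β/(β-1)²}, one has E_k ≤ (M·E_0)^{β^k} for every k ≥ 0. -/
/-!
With `r = λ^{1/(β-1)}`, the rescaled quantities `G_k = M r^k E_k` satisfy the homogeneous
recursion `G_{k+1} ≤ G_k^β`, because `M` is exactly the constant for which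
`M r^{k+1} · C λ^{k+1} = (M r^k)^β` for every `k`. Iterating gives
`G_k ≤ G_0^{β^k} = (M E_0)^{β^k}`, and `E_k ≤ G_k` since `M r^k ≥ 1`.
-/

open Real

theorem le_rpow_pow_of_forall_succ_le_rpow {x : ℕ → ℝ} {β : ℝ} (hx : ∀ k, 0 ≤ x k)
    (hβ : 0 ≤ β) (h : ∀ k, x (k + 1) ≤ x k ^ β) (k : ℕ) : x k ≤ x 0 ^ β ^ k := by
  induction k with
  | zero => simp
  | succ k ih =>
    calc x (k + 1) ≤ x k ^ β := h k
      _ ≤ (x 0 ^ β ^ k) ^ β := rpow_le_rpow (hx k) ih hβ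
      _ = x 0 ^ β ^ (k + 1) := by rw [← rpow_mul (hx 0), pow_succ]

noncomputable def deGiorgiConst (β C l : ℝ) : ℝ :=
  C ^ (1 / (β - 1)) * l ^ (β / (β - 1) ^ 2)

section DeGiorgi

variable {β C l : ℝ}

theorem one_le_deGiorgiConst (hβ : 1 < β) (hC : 1 ≤ C) (hl : 1 ≤ l) :
    1 ≤ deGiorgiConst β C l :=
  one_le_mul_of_one_le_of_one_le (one_le_rpow hC (by bound)) (one_le_rpow hl (by bound))

theorem deGiorgiConst_mul_pow_succ_mul (hβ : β ≠ 1) (hC : 0 < C) (hl : 0 < l) (k : ℕ) :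
    deGiorgiConst β C l * (l ^ (1 / (β - 1))) ^ (k + 1) * (C * l ^ (k + 1))
      = (deGiorgiConst β C l * (l ^ (1 / (β - 1))) ^ k) ^ β := by
  have hβ' : β - 1 ≠ 0 := sub_ne_zero.mpr hβ
  unfold deGiorgiConst
  refine log_injOn_pos (Set.mem_Ioi.mpr (by positivity)) (Set.mem_Ioi.mpr (by positivity)) ?_
  simp (disch := positivity) only [log_mul, log_rpow, log_pow]
  field_simp
  push_cast
  ring

theorem deGiorgiConst_rescaled_succ_le_rpow (hβ : 1 < β) (hC : 0 < C) (hl : 0 < l)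
    {E : ℕ → ℝ} (hE : ∀ k, 0 ≤ E k)
    (hrec : ∀ k, E (k + 1) ≤ C * l ^ (k + 1) * E k ^ β) (k : ℕ) :
    deGiorgiConst β C l * (l ^ (1 / (β - 1))) ^ (k + 1) * E (k + 1)
      ≤ (deGiorgiConst β C l * (l ^ (1 / (β - 1))) ^ k * E k) ^ β := by
  have hM : 0 < deGiorgiConst β C l := by unfold deGiorgiConst; positivity
  calc _ ≤ deGiorgiConst β C l * (l ^ (1 / (β - 1))) ^ (k + 1)
          * (C * l ^ (k + 1) * E k ^ β) := mul_le_mul_of_nonneg_left (hrec k) (by positivity)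
    _ = _ := by
      rw [mul_rpow (by positivity) (hE k), ← deGiorgiConst_mul_pow_succ_mul hβ.ne' hC hl]
      ring

end DeGiorgi

/-- Let `β > 1`, `C ≥ 1`, `λ ≥ 1` be reals and `(E_k)` a nonnegative sequence with
`E_{k+1} ≤ C·λ^{k+1}·E_k^β`. Then, with `M = C^{1/(β-1)}·λ^{β/(β-1)²}`, one has
`E_k ≤ (M·E_0)^{β^k}` for every `k`. -/
theorem deGiorgi_iteration_bound (β C l : ℝ) (hβ : 1 < β) (hC : 1 ≤ C) (hl : 1 ≤ l)
    (E : ℕ → ℝ) (hE : ∀ k, 0 ≤ E k)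
    (hrec : ∀ k, E (k + 1) ≤ C * l ^ (k + 1) * E k ^ β) :
    ∀ k, E k ≤ (C ^ (1 / (β - 1)) * l ^ (β / (β - 1) ^ 2) * E 0) ^ (β ^ k) := by
  intro k
  change E k ≤ (deGiorgiConst β C l * E 0) ^ β ^ k
  have hM := one_le_deGiorgiConst hβ hC hl
  have hr : 1 ≤ l ^ (1 / (β - 1)) := one_le_rpow hl (by bound)
  have hG := le_rpow_pow_of_forall_succ_le_rpow
    (x := fun k ↦ deGiorgiConst β C l * (l ^ (1 / (β - 1))) ^ k * E k)
    (fun k ↦ mul_nonneg (by positivity) (hE k)) (by linarith)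
    (deGiorgiConst_rescaled_succ_le_rpow hβ (by linarith) (by linarith) hE hrec) k
  calc E k ≤ deGiorgiConst β C l * (l ^ (1 / (β - 1))) ^ k * E k :=
        le_mul_of_one_le_left (hE k) (one_le_mul_of_one_le_of_one_le hM (one_le_pow₀ hr))
    _ ≤ (deGiorgiConst β C l * E 0) ^ β ^ k := by simpa using hG
end

section
/- Let β > 1, C ≥ 1 and λ ≥ 1 be real numbers, set M = C^{1/(β-1)}·λ^{β/(β-1)²}, and let (E_k)_{k≥0} be a sequence of nonnegative real numbers satisfying E_{k+1} ≤ C·λ^{k+1}·E_k^β for every k ≥ 0. If M·E_0 < 1, then E_k tends to 0 as k → ∞. -/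
/-!
Rescale: with `M = C^{1/(β-1)} λ^{β/(β-1)²}` the sequence `F_k = M λ^{k/(β-1)} E_k` satisfies
`F_{k+1} ≤ F_k^β`, because `M^{β-1} = C λ^{β/(β-1)}` absorbs the constant and the exponents of `λ`
match. Hence `F_k ≤ F_0^{β^k} → 0` as `F_0 = M E_0 < 1`, and `E_k ≤ F_k / M` since `λ ≥ 1`.
-/

open Filter Topology

namespace Real

theorem rpow_le_rpow_pow_of_le_rpow {β : ℝ} (hβ : 0 ≤ β) {F : ℕ → ℝ} (hF : ∀ k, 0 ≤ F k)
    (hrec : ∀ k, F (k + 1) ≤ F k ^ β) (k : ℕ) : F k ≤ F 0 ^ (β ^ k) := by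
  induction k with
  | zero => simp
  | succ k ih =>
    calc F (k + 1) ≤ F k ^ β := hrec k
      _ ≤ (F 0 ^ (β ^ k)) ^ β := rpow_le_rpow (hF k) ih hβ
      _ = F 0 ^ (β ^ (k + 1)) := by rw [← rpow_mul (hF 0), pow_succ]

theorem tendsto_zero_of_le_rpow_self {β : ℝ} (hβ : 1 < β) {F : ℕ → ℝ} (hF : ∀ k, 0 ≤ F k)
    (hrec : ∀ k, F (k + 1) ≤ F k ^ β) (h0 : F 0 < 1) : Tendsto F atTop (𝓝 0) :=
  squeeze_zero hF (rpow_le_rpow_pow_of_le_rpow (by linarith) hF hrec)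
    ((tendsto_rpow_atTop_of_base_lt_one _ (by linarith [hF 0]) h0).comp
      (tendsto_pow_atTop_atTop_of_one_lt hβ))

end Real

open Real

theorem deGiorgi_constant_rpow_sub_one {β C l : ℝ} (hβ : 1 < β) (hC : 0 < C) (hl : 0 < l) :
    (C ^ (1 / (β - 1)) * l ^ (β / (β - 1) ^ 2)) ^ (β - 1) = C * l ^ (β / (β - 1)) := by
  have hβ' : β - 1 ≠ 0 := by linarith
  rw [mul_rpow (by positivity) (by positivity), ← rpow_mul hC.le, ← rpow_mul hl.le]
  congr 2
  · rw [one_div_mul_cancel hβ', rpow_one]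
  · field_simp

theorem deGiorgi_rescaled_step {β C l : ℝ} (hβ : 1 < β) (hC : 0 < C) (hl : 0 < l) (k : ℕ)
    {a b : ℝ} (hb : 0 ≤ b) (hab : a ≤ C * l ^ (k + 1) * b ^ β) :
    C ^ (1 / (β - 1)) * l ^ (β / (β - 1) ^ 2) * l ^ (((k + 1 : ℕ) : ℝ) / (β - 1)) * a ≤
      (C ^ (1 / (β - 1)) * l ^ (β / (β - 1) ^ 2) * l ^ ((k : ℝ) / (β - 1)) * b) ^ β := by
  set M := C ^ (1 / (β - 1)) * l ^ (β / (β - 1) ^ 2)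
  have hM : 0 < M := by positivity
  have hβ' : β - 1 ≠ 0 := by linarith
  have hexp : l ^ (((k + 1 : ℕ) : ℝ) / (β - 1)) * l ^ (k + 1) =
      l ^ (β / (β - 1)) * (l ^ ((k : ℝ) / (β - 1))) ^ β := by
    rw [← rpow_natCast l (k + 1), ← rpow_add hl, ← rpow_mul hl.le, ← rpow_add hl]
    congr 1
    push_cast
    field_simp
    ring
  calc M * l ^ (((k + 1 : ℕ) : ℝ) / (β - 1)) * a
      ≤ M * l ^ (((k + 1 : ℕ) : ℝ) / (β - 1)) * (C * l ^ (k + 1) * b ^ β) := by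
        gcongr
    _ = M * M ^ (β - 1) * (l ^ ((k : ℝ) / (β - 1))) ^ β * b ^ β := by
        rw [deGiorgi_constant_rpow_sub_one hβ hC hl]
        linear_combination M * C * b ^ β * hexp
    _ = (M * l ^ ((k : ℝ) / (β - 1)) * b) ^ β := by
        rw [mul_rpow (by positivity) hb, mul_rpow hM.le (by positivity), ← rpow_one_add' hM.le]
        · ring_nf
        · linarith

/-- Let `β > 1`, `C ≥ 1`, `λ ≥ 1`, set `M = C^{1/(β-1)}·λ^{β/(β-1)²}`, and let `(E_k)` be a
nonnegative sequence with `E_{k+1} ≤ C·λ^{k+1}·E_k^β`. If `M·E_0 < 1` then `E_k → 0`. -/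
theorem deGiorgi_iteration_tendsto_zero (β C l : ℝ) (hβ : 1 < β) (hC : 1 ≤ C) (hl : 1 ≤ l)
    (E : ℕ → ℝ) (hE : ∀ k, 0 ≤ E k)
    (hrec : ∀ k, E (k + 1) ≤ C * l ^ (k + 1) * E k ^ β)
    (hsmall : C ^ (1 / (β - 1)) * l ^ (β / (β - 1) ^ 2) * E 0 < 1) :
    Filter.Tendsto E Filter.atTop (nhds 0) := by
  set M := C ^ (1 / (β - 1)) * l ^ (β / (β - 1) ^ 2)
  have hM : 0 < M := by positivity
  set F : ℕ → ℝ := fun k => M * l ^ ((k : ℝ) / (β - 1)) * E k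
  have hF : Tendsto F atTop (𝓝 0) :=
    tendsto_zero_of_le_rpow_self hβ (fun k => mul_nonneg (by positivity) (hE k))
      (fun k => deGiorgi_rescaled_step hβ (by positivity) (by positivity) k (hE k) (hrec k))
      (by simpa [F] using hsmall)
  refine squeeze_zero hE (fun k => ?_) (by simpa using hF.div_const M)
  rw [le_div_iff₀ hM]
  have hβ' : 0 < β - 1 := by linarith
  calc E k * M = M * 1 * E k := by ring
    _ ≤ M * l ^ ((k : ℝ) / (β - 1)) * E k := by
        gcongr
        · exact hE k
        · exact one_le_rpow hl (by positivity)
end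

section
/- Let (X, μ) be a measure space, K > 0, k a natural number, and for each natural number j set ℓ_j = K·(1 − 2^{−j}). Let f : X → ℝ be measurable and suppose the function x ↦ (max(0, f(x) − ℓ_k))² is integrable with respect to μ. Then x ↦ max(0, f(x) − ℓ_{k+1}) is integrable and ∫_X max(0, f(x) − ℓ_{k+1}) dμ(x) ≤ (2^{k+1}/K)·∫_X (max(0, f(x) − ℓ_k))² dμ(x). -/
open MeasureTheory

/-! For `d > 0` one has pointwise `max 0 (a - d) ≤ (max 0 a) ^ 2 / d`: trivially when `a ≤ d`,
and from `a - d ≤ a ≤ a ^ 2 / d` otherwise. Since `ℓ_{k+1} = ℓ_k + K / 2^{k+1}`, integrating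
this with `a = f - ℓ_k` and `d = K / 2^{k+1}` gives the bound. -/

theorem max_zero_sub_le_sq_div {a d : ℝ} (hd : 0 < d) :
    max 0 (a - d) ≤ (max 0 a) ^ 2 / d := by
  rcases le_or_gt (a - d) 0 with h | h
  · rw [max_eq_left h]
    positivity
  · rw [max_eq_right h.le, max_eq_right (by linarith), le_div_iff₀ hd]
    nlinarith [sq_nonneg (a - d)]

theorem max_zero_sub_eq_sqrt_sq_sub {a d : ℝ} (hd : 0 ≤ d) :
    max 0 (a - d) = max 0 (√((max 0 a) ^ 2) - d) := by
  rw [Real.sqrt_sq (le_max_left 0 a)]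
  rcases le_total a 0 with h | h
  · simp [max_eq_left h, max_eq_left (by linarith : a - d ≤ 0), hd]
  · rw [max_eq_right h]

section

variable {X : Type*} [MeasurableSpace X] {μ : Measure X} {g : X → ℝ} {d : ℝ}

/-- `max 0 (g - d)` is a continuous function of `(max 0 g) ^ 2`, through the square root. -/
theorem aestronglyMeasurable_max_zero_sub_of_sq (hd : 0 ≤ d)
    (hg : AEStronglyMeasurable (fun x => (max 0 (g x)) ^ 2) μ) :
    AEStronglyMeasurable (fun x => max 0 (g x - d)) μ := by
  have hcont : Continuous fun t : ℝ => max 0 (√t - d) := by fun_prop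
  simpa only [Function.comp_def, ← max_zero_sub_eq_sqrt_sq_sub hd] using
    hcont.comp_aestronglyMeasurable hg

theorem integrable_max_zero_sub_of_sq (hd : 0 < d)
    (hg : Integrable (fun x => (max 0 (g x)) ^ 2) μ) :
    Integrable (fun x => max 0 (g x - d)) μ := by
  refine (hg.div_const d).mono' (aestronglyMeasurable_max_zero_sub_of_sq hd.le hg.1) ?_
  filter_upwards with x
  rw [Real.norm_of_nonneg (le_max_left _ _)]
  exact max_zero_sub_le_sq_div hd

theorem integral_max_zero_sub_le_of_sq (hd : 0 < d)
    (hg : Integrable (fun x => (max 0 (g x)) ^ 2) μ) :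
    ∫ x, max 0 (g x - d) ∂μ ≤ (∫ x, (max 0 (g x)) ^ 2 ∂μ) / d := by
  rw [← integral_div]
  exact integral_mono (integrable_max_zero_sub_of_sq hd hg) (hg.div_const d)
    fun x => max_zero_sub_le_sq_div hd

end

theorem truncation_integral_bound_general {X : Type*} [MeasurableSpace X] (μ : Measure X)
    (K : ℝ) (hK : 0 < K) (k : ℕ) (f : X → ℝ)
    (hint : Integrable (fun x => (max 0 (f x - K * (1 - 1 / 2 ^ k))) ^ 2) μ) :
    Integrable (fun x => max 0 (f x - K * (1 - 1 / 2 ^ (k + 1)))) μ ∧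
      ∫ x, max 0 (f x - K * (1 - 1 / 2 ^ (k + 1))) ∂μ ≤
        2 ^ (k + 1) / K * ∫ x, (max 0 (f x - K * (1 - 1 / 2 ^ k))) ^ 2 ∂μ := by
  have hd : 0 < K / 2 ^ (k + 1) := by positivity
  have hlevel : ∀ x, f x - K * (1 - 1 / 2 ^ (k + 1)) =
      (f x - K * (1 - 1 / 2 ^ k)) - K / 2 ^ (k + 1) := fun x => by
    field_simp
    ring
  simp only [hlevel]
  refine ⟨integrable_max_zero_sub_of_sq hd hint, ?_⟩
  calc _ ≤ (∫ x, (max 0 (f x - K * (1 - 1 / 2 ^ k))) ^ 2 ∂μ) / (K / 2 ^ (k + 1)) :=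
        integral_max_zero_sub_le_of_sq hd hint
    _ = _ := by rw [div_div_eq_mul_div, mul_div_assoc, mul_comm]

/-- Let `(X, μ)` be a measure space, `K > 0`, `ℓ_j = K(1 - 2^{-j})`, and `f : X → ℝ`
measurable with `x ↦ (max(0, f x - ℓ_k))²` integrable. Then `x ↦ max(0, f x - ℓ_{k+1})`
is integrable and `∫ max(0, f - ℓ_{k+1}) dμ ≤ (2^{k+1}/K) ∫ (max(0, f - ℓ_k))² dμ`. -/
theorem truncation_integral_bound {X : Type*} [MeasurableSpace X] (μ : Measure X)
    (K : ℝ) (hK : 0 < K) (k : ℕ) (f : X → ℝ) (hf : Measurable f)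
    (hint : Integrable (fun x => (max 0 (f x - K * (1 - 1 / 2 ^ k))) ^ 2) μ) :
    Integrable (fun x => max 0 (f x - K * (1 - 1 / 2 ^ (k + 1)))) μ ∧
      ∫ x, max 0 (f x - K * (1 - 1 / 2 ^ (k + 1))) ∂μ ≤
        2 ^ (k + 1) / K * ∫ x, (max 0 (f x - K * (1 - 1 / 2 ^ k))) ^ 2 ∂μ :=
  truncation_integral_bound_general μ K hK k f hint
end

section
/- Let n ≥ 1 be a natural number and α ∈ (−1, 1). There is a constant C = C(n, α) > 0 such that for every Schwartz function f : ℝⁿ → ℂ, (∫_{ℝⁿ} |f(x)|² dx)^{1/2} ≤ C·(∫_{ℝⁿ} |f(x)| dx)^{(1+α)/(n+1+α)}·(∫_{ℝⁿ} ‖ξ‖^{1+α}·|𝓕f(ξ)|² dξ)^{n/(2(n+1+α))}, where 𝓕f denotes the Fourier transform of f. -/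
open MeasureTheory Real Metric
open scoped FourierTransform

/-!
Split frequency space at radius `R`. On the ball `‖𝓕 f‖ ≤ ‖f‖₁`, so by Plancherel the ball
contributes at most `|B₁| Rⁿ ‖f‖₁²`; outside it `1 ≤ R^{-β} ‖ξ‖^β`, so the rest contributes at most
`R^{-β} ∫ ‖ξ‖^β |𝓕 f|²`, with `β = 1 + α`. Choosing `R^{n+β} = ∫ ‖ξ‖^β |𝓕 f|² / ‖f‖₁²`
balances the two terms and gives the inequality; degenerate cases follow by perturbing both
quantities by `ε` and letting `ε → 0`.
-/

lemma le_of_forall_le_mul_rpow_add_of_pos {L A B c d β : ℝ} (hA : 0 < A) (hB : 0 < B)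
    (hd : 0 ≤ d) (hβ : 0 < β) (h : ∀ R > 0, L ≤ c * R ^ d * A + R ^ (-β) * B) :
    L ≤ (c + 1) * A ^ (β / (d + β)) * B ^ (d / (d + β)) := by
  have hp : d + β ≠ 0 := by positivity
  obtain ⟨a, rfl⟩ : ∃ a, exp a = A := ⟨log A, exp_log hA⟩
  obtain ⟨b, rfl⟩ : ∃ b, exp b = B := ⟨log B, exp_log hB⟩
  -- with `R ^ (d + β) = B / A` both terms equal `A ^ (β / (d + β)) * B ^ (d / (d + β))`
  have hR := h (exp ((b - a) / (d + β))) (exp_pos _)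
  simp only [← Real.exp_mul, ← exp_add] at hR ⊢
  have e₁ : (b - a) / (d + β) * d + a = a * (β / (d + β)) + b * (d / (d + β)) := by
    field_simp; ring
  have e₂ : (b - a) / (d + β) * -β + b = a * (β / (d + β)) + b * (d / (d + β)) := by
    field_simp; ring
  rw [mul_assoc, ← exp_add, e₁, e₂] at hR
  rw [mul_assoc, ← exp_add]
  linarith

lemma le_of_forall_le_mul_rpow_add {L A B c d β : ℝ} (hA : 0 ≤ A) (hB : 0 ≤ B) (hc : 0 ≤ c)
    (hd : 0 ≤ d) (hβ : 0 < β) (h : ∀ R > 0, L ≤ c * R ^ d * A + R ^ (-β) * B) :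
    L ≤ (c + 1) * A ^ (β / (d + β)) * B ^ (d / (d + β)) := by
  have hε : ∀ ε > 0, L ≤ (c + 1) * (A + ε) ^ (β / (d + β)) * (B + ε) ^ (d / (d + β)) :=
    fun ε hε ↦ le_of_forall_le_mul_rpow_add_of_pos (by positivity) (by positivity) hd hβ
      fun R hR ↦ (h R hR).trans (by gcongr <;> linarith)
  have hcont : ContinuousAt
      (fun ε ↦ (c + 1) * (A + ε) ^ (β / (d + β)) * (B + ε) ^ (d / (d + β))) 0 := by
    have : 0 ≤ β / (d + β) := by positivity
    have : 0 ≤ d / (d + β) := by positivity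
    fun_prop (disch := simp [*])
  simpa using ge_of_tendsto (hcont.tendsto.mono_left nhdsWithin_le_nhds)
    (eventually_nhdsWithin_of_forall (s := Set.Ioi 0) hε)

lemma rpow_half_le_of_forall_le {L M J c d β : ℝ} (hL : 0 ≤ L) (hM : 0 ≤ M) (hJ : 0 ≤ J)
    (hc : 0 ≤ c) (hd : 0 ≤ d) (hβ : 0 < β) (h : ∀ R > 0, L ≤ c * R ^ d * M ^ 2 + R ^ (-β) * J) :
    L ^ (1 / 2 : ℝ) ≤ (c + 1) ^ (1 / 2 : ℝ) * M ^ (β / (d + β)) * J ^ (d / (2 * (d + β))) := by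
  have hLe := le_of_forall_le_mul_rpow_add (sq_nonneg M) hJ hc hd hβ h
  calc L ^ (1 / 2 : ℝ)
      ≤ ((c + 1) * (M ^ 2) ^ (β / (d + β)) * J ^ (d / (d + β))) ^ (1 / 2 : ℝ) :=
        rpow_le_rpow hL hLe (by norm_num)
    _ = (c + 1) ^ (1 / 2 : ℝ) * M ^ (β / (d + β)) * J ^ (d / (2 * (d + β))) := by
        rw [mul_rpow (by positivity) (by positivity), mul_rpow (by positivity) (by positivity),
          ← rpow_mul hJ, ← rpow_pow_comm hM, ← rpow_natCast, ← rpow_mul (by positivity)]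
        congr 2
        · norm_num
        · field_simp

lemma Real.rpow_le_one_add_pow_natCeil {x s : ℝ} (hx : 0 ≤ x) (hs : 0 ≤ s) :
    x ^ s ≤ 1 + x ^ ⌈s⌉₊ := by
  rcases le_total x 1 with h | h
  · linarith [rpow_le_one hx h hs, pow_nonneg hx ⌈s⌉₊]
  · have := rpow_le_rpow_of_exponent_le h (Nat.le_ceil s)
    rw [rpow_natCast] at this
    linarith

lemma sq_le_indicator_ball_add_rpow_mul {E : Type*} [NormedAddCommGroup E] {a M R β : ℝ}
    (ha : 0 ≤ a) (haM : a ≤ M) (hR : 0 < R) (hβ : 0 ≤ β) (x : E) :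
    a ^ 2 ≤ (ball (0 : E) R).indicator (fun _ ↦ M ^ 2) x + R ^ (-β) * (‖x‖ ^ β * a ^ 2) := by
  have hw : 0 ≤ R ^ (-β) * (‖x‖ ^ β * a ^ 2) := by positivity
  by_cases hx : x ∈ ball (0 : E) R
  · rw [Set.indicator_of_mem hx]
    nlinarith
  · have hRx : 1 ≤ R ^ (-β) * ‖x‖ ^ β := by
      rw [rpow_neg hR.le, inv_mul_eq_div, one_le_div (by positivity)]
      exact rpow_le_rpow hR.le (by simpa using hx) hβ
    rw [Set.indicator_of_notMem hx, zero_add, ← mul_assoc]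
    nlinarith [sq_nonneg a]

namespace SchwartzMap

section Integrable

variable {D F : Type*} [NormedAddCommGroup D] [MeasurableSpace D] [BorelSpace D]
  [SecondCountableTopology D] [NormedSpace ℝ D] [NormedAddCommGroup F] [NormedSpace ℝ F]
  {μ : Measure D} [μ.HasTemperateGrowth]

lemma integrable_rpow_mul (f : 𝓢(D, F)) {s : ℝ} (hs : 0 ≤ s) :
    Integrable (fun x ↦ ‖x‖ ^ s * ‖f x‖) μ := by
  refine (f.integrable.norm.add (f.integrable_pow_mul μ ⌈s⌉₊)).mono'
    (by fun_prop (disch := exact Or.inr hs)) (ae_of_all _ fun x ↦ ?_)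
  rw [norm_of_nonneg (by positivity), Pi.add_apply]
  nlinarith [Real.rpow_le_one_add_pow_natCeil (norm_nonneg x) hs, norm_nonneg (f x)]

lemma integrable_rpow_mul_norm_sq (f : 𝓢(D, F)) {s : ℝ} (hs : 0 ≤ s) :
    Integrable (fun x ↦ ‖x‖ ^ s * ‖f x‖ ^ 2) μ := by
  simpa only [sq, mul_assoc] using
    (f.integrable_rpow_mul hs).mul_bdd (c := SchwartzMap.seminorm ℝ 0 0 f) (by fun_prop)
      (ae_of_all _ fun x ↦ by simpa using f.norm_le_seminorm ℝ x)

end Integrable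

variable {V H : Type*} [NormedAddCommGroup V] [InnerProductSpace ℝ V] [FiniteDimensional ℝ V]
  [MeasurableSpace V] [BorelSpace V] [NormedAddCommGroup H] [InnerProductSpace ℂ H]
  [CompleteSpace H]

lemma integral_norm_sq_le_ball_add_weighted (f : 𝓢(V, H)) {β R : ℝ} (hβ : 0 ≤ β)
    (hR : 0 < R) :
    ∫ x, ‖f x‖ ^ 2 ≤ volume.real (ball (0 : V) 1) * R ^ Module.finrank ℝ V * (∫ x, ‖f x‖) ^ 2
      + R ^ (-β) * ∫ ξ, ‖ξ‖ ^ β * ‖𝓕 (⇑f) ξ‖ ^ 2 := by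
  set M := ∫ x, ‖f x‖
  have hM (ξ : V) : ‖𝓕 f ξ‖ ≤ M := by
    simpa [norm_toLp_one] using f.norm_fourier_apply_le_toLp_one ξ
  have hball : volume.real (ball (0 : V) R)
      = volume.real (ball (0 : V) 1) * R ^ Module.finrank ℝ V := by
    rw [measureReal_def, Measure.addHaar_ball_of_pos _ _ hR, ENNReal.toReal_mul,
      ENNReal.toReal_ofReal (by positivity), measureReal_def, mul_comm]
  have hind : Integrable ((ball (0 : V) R).indicator fun _ ↦ M ^ 2) :=
    (integrableOn_const measure_ball_lt_top.ne).integrable_indicator measurableSet_ball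
  have hweight := ((𝓕 f).integrable_rpow_mul_norm_sq (μ := volume) hβ).const_mul (R ^ (-β))
  calc ∫ x, ‖f x‖ ^ 2 = ∫ ξ, ‖𝓕 f ξ‖ ^ 2 := (integral_norm_sq_fourier f).symm
    _ ≤ ∫ ξ, (ball (0 : V) R).indicator (fun _ ↦ M ^ 2) ξ
          + R ^ (-β) * (‖ξ‖ ^ β * ‖𝓕 f ξ‖ ^ 2) :=
      integral_mono_of_nonneg (ae_of_all _ fun _ ↦ by positivity) (hind.add hweight)
        (ae_of_all _ fun ξ ↦ sq_le_indicator_ball_add_rpow_mul (norm_nonneg _) (hM ξ) hR hβ ξ)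
    _ = _ := by
      rw [integral_add hind hweight, integral_indicator_const _ measurableSet_ball,
        integral_const_mul, hball, smul_eq_mul]
      rfl

end SchwartzMap

theorem schwartz_interpolation_L1_Hs_general (n : ℕ) (α : ℝ)
    (hα : α ∈ Set.Ioo (-1 : ℝ) 1) :
    ∃ C : ℝ, 0 < C ∧ ∀ f : SchwartzMap (EuclideanSpace ℝ (Fin n)) ℂ,
      (∫ x, ‖f x‖ ^ 2) ^ ((1 : ℝ) / 2) ≤
        C * (∫ x, ‖f x‖) ^ ((1 + α) / (n + 1 + α)) *
          (∫ ξ, ‖ξ‖ ^ (1 + α) * ‖𝓕 (⇑f) ξ‖ ^ 2) ^ ((n : ℝ) / (2 * (n + 1 + α))) := by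
  have hβ : 0 < 1 + α := by linarith [hα.1]
  refine ⟨(volume.real (ball (0 : EuclideanSpace ℝ (Fin n)) 1) + 1) ^ (1 / 2 : ℝ),
    by positivity, fun f ↦ ?_⟩
  have hsplit (R : ℝ) (hR : 0 < R) := f.integral_norm_sq_le_ball_add_weighted hβ.le hR
  rw [finrank_euclideanSpace_fin] at hsplit
  simpa only [add_assoc] using rpow_half_le_of_forall_le (integral_nonneg fun _ ↦ by positivity)
    (integral_nonneg fun _ ↦ by positivity) (integral_nonneg fun _ ↦ by positivity)
    measureReal_nonneg n.cast_nonneg hβ fun R hR ↦ by simpa using hsplit R hR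

/-- Let `n ≥ 1` and `α ∈ (-1,1)`. There is `C = C(n,α) > 0` such that for every Schwartz
function `f : ℝⁿ → ℂ`,
`(∫ |f|²)^{1/2} ≤ C·(∫ |f|)^{(1+α)/(n+1+α)}·(∫ ‖ξ‖^{1+α}|𝓕f(ξ)|² dξ)^{n/(2(n+1+α))}`. -/
theorem schwartz_interpolation_L1_Hs (n : ℕ) (hn : 1 ≤ n) (α : ℝ)
    (hα : α ∈ Set.Ioo (-1 : ℝ) 1) :
    ∃ C : ℝ, 0 < C ∧ ∀ f : SchwartzMap (EuclideanSpace ℝ (Fin n)) ℂ,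
      (∫ x, ‖f x‖ ^ 2) ^ ((1 : ℝ) / 2) ≤
        C * (∫ x, ‖f x‖) ^ ((1 + α) / (n + 1 + α)) *
          (∫ ξ, ‖ξ‖ ^ (1 + α) * ‖𝓕 (⇑f) ξ‖ ^ 2) ^ ((n : ℝ) / (2 * (n + 1 + α))) :=
  schwartz_interpolation_L1_Hs_general n α hα
end

section
/- Let E be a finite-dimensional real normed vector space, let u : ℝ × E → E be continuous and globally Lipschitz in the space variable uniformly in time (i.e. there is L ≥ 0 with ‖u(t,x) − u(t,y)‖ ≤ L‖x − y‖ for all t, x, y), and let θ : ℝ × E → ℝ be continuously differentiable and satisfy the transport equation ∂_t θ(t,x) + D_x θ(t,x)(u(t,x)) = 0 for all (t,x) ∈ ℝ × E. Then for every t ∈ ℝ the range of x ↦ θ(t,x) equals the range of x ↦ θ(0,x); in particular the supremum and the infimum of θ(t,·) are independent of t. -/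
/-!
The range of `θ(t, ·)` is locally constant in `t`, hence constant on the connected line. Since `u`
is Lipschitz in space uniformly in time, Picard–Lindelöf provides integral curves of `u` through
every point `(a, x)` on the common time interval `[a - δ, a + δ]`. Along such a curve `γ` the
transport equation says `d/dt θ(t, γ t) = 0`, so every value `θ(a, x)` is attained by `θ(b, ·)`
whenever `|b - a| ≤ δ`, and by symmetry the two ranges agree.
-/

open Set Metric
open scoped NNReal

section Transport

variable {E F : Type*} [NormedAddCommGroup E] [NormedSpace ℝ E]
  [NormedAddCommGroup F] [NormedSpace ℝ F]

theorem fderiv_apply_one_prodMk {θ : ℝ × E → F} {t : ℝ} {x : E}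
    (h : DifferentiableAt ℝ θ (t, x)) (v : E) :
    fderiv ℝ θ (t, x) (1, v) =
      deriv (fun s => θ (s, x)) t + fderiv ℝ (fun y => θ (t, y)) x v := by
  have htime : HasDerivAt (fun s => θ (s, x)) (fderiv ℝ θ (t, x) (1, 0)) t :=
    h.hasFDerivAt.comp_hasDerivAt t ((hasDerivAt_id t).prodMk (hasDerivAt_const t x))
  have hspace : HasFDerivAt (fun y => θ (t, y))
      ((fderiv ℝ θ (t, x)).comp (ContinuousLinearMap.inr ℝ ℝ E)) x :=
    h.hasFDerivAt.comp x ((hasFDerivAt_const t x).prodMk (hasFDerivAt_id x))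
  rw [htime.deriv, hspace.fderiv, ContinuousLinearMap.comp_apply, ContinuousLinearMap.inr_apply,
    ← map_add, Prod.mk_add_mk, add_zero, zero_add]

theorem HasDerivWithinAt.comp_prodMk_self {θ : ℝ × E → F} {f : ℝ → E} {v : E} {s : Set ℝ}
    {t : ℝ} (hθ : DifferentiableAt ℝ θ (t, f t)) (hf : HasDerivWithinAt f v s t) :
    HasDerivWithinAt (fun τ => θ (τ, f τ))
      (deriv (fun τ => θ (τ, f t)) t + fderiv ℝ (fun y => θ (t, y)) (f t) v) s t := by
  rw [← fderiv_apply_one_prodMk hθ]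
  exact hθ.hasFDerivAt.comp_hasDerivWithinAt t ((hasDerivWithinAt_id t s).prodMk hf)

theorem eq_along_integralCurve_of_transport {u : ℝ × E → E} {θ : ℝ × E → F}
    (hθ : Differentiable ℝ θ)
    (hpde : ∀ t x, deriv (fun s => θ (s, x)) t + fderiv ℝ (fun y => θ (t, y)) x (u (t, x)) = 0)
    {f : ℝ → E} {s : Set ℝ} (hs : Convex ℝ s) (hf : ∀ t ∈ s, HasDerivWithinAt f (u (t, f t)) s t)
    {a b : ℝ} (ha : a ∈ s) (hb : b ∈ s) :
    θ (b, f b) = θ (a, f a) := by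
  have hderiv (t) (ht : t ∈ s) : HasDerivWithinAt (fun τ => θ (τ, f τ)) 0 s t := by
    simpa only [hpde] using (hf t ht).comp_prodMk_self (hθ _)
  simpa [sub_eq_zero] using
    hs.norm_image_sub_le_of_norm_hasDerivWithin_le hderiv (fun _ _ => norm_zero.le) ha hb

end Transport

section PicardLindelof

variable {E : Type*} [NormedAddCommGroup E] [NormedSpace ℝ E] [CompleteSpace E]

theorem exists_uniform_integralCurve_of_lipschitzWith {u : ℝ × E → E} (hu : Continuous u)
    {K : ℝ≥0} (hK : ∀ t, LipschitzWith K fun x => u (t, x)) :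
    ∃ δ > 0, ∀ (t₀ : ℝ) (x₀ : E), ∃ f : ℝ → E, f t₀ = x₀ ∧
      ∀ t ∈ closedBall t₀ δ, HasDerivWithinAt f (u (t, f t)) (closedBall t₀ δ) t := by
  -- With this `δ` the Picard–Lindelöf time condition `(1 + K) a δ ≤ a` holds for every radius `a`.
  set δ : ℝ := (2 * (1 + K))⁻¹
  refine ⟨δ, by positivity, fun t₀ x₀ => ?_⟩
  obtain ⟨M, hM⟩ := isCompact_Icc.exists_bound_of_continuousOn (s := Icc (t₀ - δ) (t₀ + δ))
    (hu.comp (continuous_id.prodMk continuous_const)).continuousOn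
  set a : ℝ≥0 := M.toNNReal
  have hpl : IsPicardLindelof (fun t x => u (t, x)) (tmin := t₀ - δ) (tmax := t₀ + δ)
      ⟨t₀, by constructor <;> linarith [show 0 < δ by positivity]⟩ x₀ a 0 ((1 + K) * a) K := by
    refine ⟨fun t _ => (hK t).lipschitzOnWith, fun x _ =>
      (hu.comp (continuous_id.prodMk continuous_const)).continuousOn, fun t ht x hx => ?_, ?_⟩
    · calc ‖u (t, x)‖ ≤ ‖u (t, x₀)‖ + ‖u (t, x) - u (t, x₀)‖ := norm_le_norm_add_norm_sub' _ _
        _ ≤ a + K * a := by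
          gcongr
          · exact (hM t ht).trans (Real.le_coe_toNNReal M)
          · exact ((hK t).norm_sub_le x x₀).trans
              (mul_le_mul_of_nonneg_left (mem_closedBall_iff_norm.mp hx) K.2)
        _ = ((1 + K) * a : ℝ≥0) := by push_cast; ring
    · have : (1 + K) * δ = 2⁻¹ := by simp only [δ]; field_simp
      simp only [add_sub_cancel_left, sub_sub_cancel, max_self, NNReal.coe_zero, sub_zero]
      push_cast
      rw [mul_right_comm, this]
      linarith [a.2]
  rw [Real.closedBall_eq_Icc]
  exact hpl.exists_eq_forall_mem_Icc_hasDerivWithinAt₀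

end PicardLindelof

/-- Let `E` be a finite-dimensional real normed vector space, `u : ℝ × E → E` continuous
and globally Lipschitz in space uniformly in time, and `θ : ℝ × E → ℝ` a `C¹` solution of
the transport equation `∂_t θ(t,x) + D_x θ(t,x)(u(t,x)) = 0`. Then for every `t` the range
of `θ(t,·)` equals the range of `θ(0,·)`; in particular `sup` and `inf` of `θ(t,·)` are
independent of `t`. -/
theorem transport_equation_range_invariant
    {E : Type*} [NormedAddCommGroup E] [NormedSpace ℝ E] [FiniteDimensional ℝ E]
    (u : ℝ × E → E) (hu : Continuous u)
    (L : ℝ) (hL : 0 ≤ L)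
    (hLip : ∀ t x y, ‖u (t, x) - u (t, y)‖ ≤ L * ‖x - y‖)
    (θ : ℝ × E → ℝ) (hθ : ContDiff ℝ 1 θ)
    (hpde : ∀ t x, deriv (fun s => θ (s, x)) t +
      fderiv ℝ (fun y => θ (t, y)) x (u (t, x)) = 0) :
    ∀ t : ℝ, Set.range (fun x => θ (t, x)) = Set.range (fun x => θ (0, x)) := by
  have hK (t : ℝ) : LipschitzWith ⟨L, hL⟩ fun x => u (t, x) :=
    .of_dist_le_mul fun x y => by rw [dist_eq_norm, dist_eq_norm]; exact hLip t x y
  obtain ⟨δ, hδ, hflow⟩ := exists_uniform_integralCurve_of_lipschitzWith hu hK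
  have hsubset {a b : ℝ} (hb : b ∈ closedBall a δ) :
      range (fun x => θ (a, x)) ⊆ range (fun x => θ (b, x)) := by
    rintro _ ⟨x, rfl⟩
    obtain ⟨f, rfl, hf⟩ := hflow a x
    exact ⟨f b, eq_along_integralCurve_of_transport (hθ.differentiable one_ne_zero) hpde
      (convex_closedBall a δ) hf (mem_closedBall_self hδ.le) hb⟩
  have hloc : IsLocallyConstant fun t => range fun x => θ (t, x) := by
    refine (IsLocallyConstant.iff_eventually_eq _).mpr fun a => ?_
    filter_upwards [closedBall_mem_nhds a hδ] with b hb
    exact (hsubset (mem_closedBall_comm.mp hb)).antisymm (hsubset hb)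
  exact fun t => hloc.apply_eq_of_preconnectedSpace t 0
end
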